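/- Let W = W(Γ) be the right-angled Coxeter group of a simple graph Γ with word length ℓ, and let w ∈ W. For every triple (w₁, w₂, w₃) ∈ S_w there exist n_l, n_r ∈ ℕ and (u_l, u_r, t) ∈ T such that, for ρ = (n_l, n_r, u_l, u_r, t), one has |ρ| = ℓ(w) and (w₁, w₂, w₃) ∈ S_w(ρ). Together with the disjointness of the sets S_w(ρ), this shows that {S_w(ρ) : |ρ| = ℓ(w)} is a partition of S_w. -/

import Mathlib

namespace RACG

variable {V : Type*} [DecidableEq V]

/-- The right-angled Coxeter matrix of a simple graph `G`: diagonal entries are `1`,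
entries at adjacent pairs are `2` (the generators commute), and entries at distinct
non-adjacent pairs are `0` (representing `∞`, i.e. no relation). -/
def racgMatrix (G : SimpleGraph V) [DecidableRel G.Adj] : CoxeterMatrix V where
  M a b := if a = b then 1 else if G.Adj a b then 2 else 0
  isSymm := by
    refine Matrix.ext fun a b => ?_
    show (if b = a then 1 else if G.Adj b a then 2 else 0) = (if a = b then 1 else if G.Adj a b then 2 else 0)
    by_cases h : a = b
    · subst h; rfl
    · rw [if_neg h, if_neg (Ne.symm h)]
      by_cases hadj : G.Adj a b
      · rw [if_pos hadj, if_pos hadj.symm]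
      · rw [if_neg hadj, if_neg (fun h' => hadj h'.symm)]
  diagonal := fun i => by simp
  off_diagonal := fun i i' h => by
    rw [if_neg h]
    by_cases hadj : G.Adj i i' <;> simp [hadj]

variable {G : SimpleGraph V} [DecidableRel G.Adj] {W : Type*} [Group W]

/-- In the right-angled Coxeter group of `G`, the simple reflections at adjacent
vertices commute. -/
theorem simple_commute_of_adj (cs : CoxeterSystem (racgMatrix G) W) {a b : V}
    (h : G.Adj a b) : Commute (cs.simple a) (cs.simple b) := by
  have hM : (racgMatrix G) a b = 2 := by
    simp only [racgMatrix, if_neg h.ne, if_pos h]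
  have h2 := cs.simple_mul_simple_pow a b
  rw [hM, pow_two] at h2
  have h3 := mul_eq_one_iff_eq_inv.mp h2
  rwa [mul_inv_rev, cs.inv_simple, cs.inv_simple] at h3

/-- The clique word associated to a finite set `C` of pairwise adjacent vertices:
the product of the simple reflections at the vertices of `C` (in any order; these
commute). If `C` is not a clique, we set the value to `1` by convention. -/
noncomputable def cliqueWord (cs : CoxeterSystem (racgMatrix G) W) (C : Finset V) : W :=
  if h : (C : Set V).Pairwise G.Adj then
    C.noncommProd (fun v => cs.simple v)
      (fun _ ha _ hb hab => simple_commute_of_adj cs (h ha hb hab))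
  else 1

/-- `w` is a clique word if it is the product of the simple reflections over a finite
set of pairwise adjacent vertices. -/
def IsCliqueWord (cs : CoxeterSystem (racgMatrix G) W) (w : W) : Prop :=
  ∃ C : Finset V, (C : Set V).Pairwise G.Adj ∧ w = cliqueWord cs C

variable (cs : CoxeterSystem (racgMatrix G) W)

/-- The set `W̃ₙᴿ(u)` of elements `w` of length `n` such that `w·u` is reduced and
`w·u` has the same right descents as `u`. -/
def WtildeR (n : ℕ) (u : W) : Set W :=
  {w | cs.length w = n ∧ cs.length (w * u) = cs.length w + cs.length u ∧
    ∀ v : V, (cs.IsRightDescent (w * u) v ↔ cs.IsRightDescent u v)}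

/-- Membership in the set `T` of triples `(u_l, u_r, t)` such that `u_l·t` and `t·u_r`
are clique words and `u_l·t·u_r` is reduced. -/
def MemT (ul ur t : W) : Prop :=
  IsCliqueWord cs (ul * t) ∧ IsCliqueWord cs (t * ur) ∧
    cs.length (ul * t * ur) = cs.length ul + cs.length t + cs.length ur

/-- Membership in the set `S_w` of triples `(w₁, w₂, w₃)` with `w₁·w₂·w₃ = w` a reduced
expression and `w₂` a clique word. -/
def MemS (w w₁ w₂ w₃ : W) : Prop :=
  w₁ * w₂ * w₃ = w ∧ cs.length w = cs.length w₁ + cs.length w₂ + cs.length w₃ ∧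
    IsCliqueWord cs w₂

/-- Membership in the set `S_w(ρ)` for the tuple `ρ = (n_l, n_r, u_l, u_r, t)`. -/
def MemSRho (w : W) (nl nr : ℕ) (ul ur t : W) (w₁ w₂ w₃ : W) : Prop :=
  MemS cs w w₁ w₂ w₃ ∧ w₂ = t ∧
    ∃ vl ∈ WtildeR cs nl (ul * t), ∃ vr ∈ WtildeR cs nr (ur * t),
      w₁ = vl * ul ∧ w₃ = ur⁻¹ * vr⁻¹

end RACG

/-!
Write `c(C)` for the clique word of a clique `C`. In a right-angled Coxeter group two distinct
right descents `a`, `b` of an element `y` are adjacent. Otherwise `⟨s_a, s_b⟩` is infinite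
dihedral; let `z` have minimal length in `y ⟨s_a, s_b⟩`. The exchange property (from Tits'
cocycle) gives `ℓ(z u) = ℓ(z) + |u · 0|` for `u ∈ ⟨s_a, s_b⟩`, acting on `ℤ` by the reflections
in `∓1/2`. Both descents would then force `|f(±1)| < |f(0)|` for an isometry `f` of `ℤ`.

So the right descents of `y = w₁ w₂`, `w₂ = c(C)`, form a clique `D ⊇ C`, and removing them one
at a time gives `ℓ(y c(D)) = ℓ(y) - |D|`. Then `u_l = c(D \ C)` and `v_l = w₁ u_l = y c(D)` give a
reduced product `v_l (u_l t) = y` with the same right descents `D` as the clique word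
`u_l t = c(D)`. The right half comes from `(w₂ w₃)⁻¹` in the same way, and `u_l t u_r` is reduced
because `w` is.
-/

namespace CoxeterSystem

variable {B : Type*} {M : CoxeterMatrix B} {W : Type*} [Group W] (cs : CoxeterSystem M W)

theorem simple_mul_mul_simple_eq_iff (i : B) (t r : W) :
    cs.simple i * t * cs.simple i = r ↔ t = cs.simple i * r * cs.simple i := by
  constructor <;> rintro rfl <;> simp [mul_assoc]

theorem length_mul_mul_le (x y z : W) :
    cs.length (x * y * z) ≤ cs.length x + cs.length y + cs.length z :=
  (cs.length_mul_le _ z).trans (Nat.add_le_add_right (cs.length_mul_le x y) _)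

theorem length_mul_left_of_length_mul_mul {x y z : W}
    (h : cs.length (x * y * z) = cs.length x + cs.length y + cs.length z) :
    cs.length (x * y) = cs.length x + cs.length y := by
  have := cs.length_mul_le x y
  have := cs.length_mul_le (x * y) z
  omega

theorem length_mul_right_of_length_mul_mul {x y z : W}
    (h : cs.length (x * y * z) = cs.length x + cs.length y + cs.length z) :
    cs.length (y * z) = cs.length y + cs.length z := by
  have := cs.length_mul_le y z
  have := cs.length_mul_le x (y * z)
  rw [← mul_assoc] at this
  omega

end CoxeterSystem

namespace RACG

open CoxeterSystem

variable {V : Type*} [DecidableEq V] {G : SimpleGraph V} [DecidableRel G.Adj]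

theorem racgMatrix_self (a : V) : racgMatrix G a a = 1 := by simp [racgMatrix]

theorem racgMatrix_of_adj {a b : V} (h : G.Adj a b) : racgMatrix G a b = 2 := by
  simp [racgMatrix, h.ne, h]

theorem racgMatrix_of_not_adj {a b : V} (hne : a ≠ b) (h : ¬G.Adj a b) :
    racgMatrix G a b = 0 := by
  simp [racgMatrix, hne, h]

theorem isLiftable_racgMatrix {H : Type*} [Monoid H] {f : V → H} (hsq : ∀ v, f v * f v = 1)
    (hcomm : ∀ a b, G.Adj a b → Commute (f a) (f b)) : (racgMatrix G).IsLiftable f := by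
  intro a b
  by_cases hab : a = b
  · rw [hab, racgMatrix_self, pow_one, hsq]
  by_cases hadj : G.Adj a b
  · rw [racgMatrix_of_adj hadj, sq, mul_assoc, ← mul_assoc (f b), ← (hcomm a b hadj).eq,
      mul_assoc, hsq, mul_one, hsq]
  · rw [racgMatrix_of_not_adj hab hadj, pow_zero]

variable {W : Type*} [Group W] (cs : CoxeterSystem (racgMatrix G) W)

theorem isLiftable_letterParity :
    (racgMatrix G).IsLiftable fun v : V ↦ Multiplicative.ofAdd (Finsupp.single v (1 : ZMod 2)) :=
  isLiftable_racgMatrix (fun v ↦ by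
      rw [← ofAdd_add, ← Finsupp.single_add, CharTwo.add_self_eq_zero, Finsupp.single_zero,
        ofAdd_zero])
    fun _ _ _ ↦ Commute.all _ _

noncomputable def letterParity : W →* Multiplicative (V →₀ ZMod 2) :=
  cs.lift ⟨_, isLiftable_letterParity⟩

/-- The letters that occur an odd number of times in one (equivalently, every) word for `w`. -/
noncomputable def oddLetters (w : W) : Finset V :=
  (Multiplicative.toAdd (letterParity cs w)).support

theorem oddLetters_simple (v : V) : oddLetters cs (cs.simple v) = {v} := by
  rw [oddLetters, letterParity, cs.lift_apply_simple]
  exact Finsupp.support_single v one_ne_zero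

theorem oddLetters_mul_subset (x y : W) :
    oddLetters cs (x * y) ⊆ oddLetters cs x ∪ oddLetters cs y := by
  rw [oddLetters, map_mul, toAdd_mul]
  exact Finsupp.support_add

theorem oddLetters_mul_of_disjoint {x y : W} (h : Disjoint (oddLetters cs x) (oddLetters cs y)) :
    oddLetters cs (x * y) = oddLetters cs x ∪ oddLetters cs y := by
  rw [oddLetters, map_mul, toAdd_mul]
  exact Finsupp.support_add_eq h

theorem card_oddLetters_le_length (w : W) : (oddLetters cs w).card ≤ cs.length w := by
  suffices ∀ ω : List V, (oddLetters cs (cs.wordProd ω)).card ≤ ω.length by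
    obtain ⟨ω, hω, rfl⟩ := cs.exists_isReduced w
    exact hω.eq ▸ this ω
  intro ω
  induction ω with
  | nil => simp [oddLetters]
  | cons i ω ih =>
    rw [cs.wordProd_cons, List.length_cons]
    calc (oddLetters cs (cs.simple i * cs.wordProd ω)).card
        ≤ (oddLetters cs (cs.simple i) ∪ oddLetters cs (cs.wordProd ω)).card :=
          Finset.card_le_card (oddLetters_mul_subset cs _ _)
      _ ≤ 1 + ω.length := by
          grw [Finset.card_union_le, oddLetters_simple, Finset.card_singleton, ih]
      _ = ω.length + 1 := add_comm _ _

theorem simple_injective : Function.Injective cs.simple := fun a b h ↦ by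
  simpa [oddLetters_simple] using congrArg (oddLetters cs) h

theorem cliqueWord_eq_noncommProd {C : Finset V} (hC : (C : Set V).Pairwise G.Adj) :
    cliqueWord cs C = C.noncommProd cs.simple
      (fun _ ha _ hb hab ↦ simple_commute_of_adj cs (hC ha hb hab)) :=
  dif_pos hC

theorem cliqueWord_union {A C : Finset V} (hdisj : Disjoint A C)
    (hAC : ((A ∪ C : Finset V) : Set V).Pairwise G.Adj) :
    cliqueWord cs (A ∪ C) = cliqueWord cs A * cliqueWord cs C := by
  rw [cliqueWord_eq_noncommProd cs hAC,
    cliqueWord_eq_noncommProd cs (hAC.mono (by simp)),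
    cliqueWord_eq_noncommProd cs (hAC.mono (by simp))]
  exact Finset.noncommProd_union_of_disjoint hdisj _ _

theorem cliqueWord_singleton (v : V) : cliqueWord cs {v} = cs.simple v := by
  rw [cliqueWord_eq_noncommProd cs (by simp), Finset.noncommProd_singleton]

theorem cliqueWord_empty : cliqueWord cs (∅ : Finset V) = 1 := by
  rw [cliqueWord_eq_noncommProd cs (by simp)]
  exact Finset.noncommProd_empty _ _

theorem commute_simple_cliqueWord {C : Finset V} (hC : (C : Set V).Pairwise G.Adj) {v : V}
    (h : ∀ c ∈ C, c ≠ v → G.Adj v c) : Commute (cs.simple v) (cliqueWord cs C) := by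
  rw [cliqueWord_eq_noncommProd cs hC]
  refine Finset.noncommProd_commute _ _ _ _ fun c hc ↦ ?_
  obtain rfl | hne := eq_or_ne c v
  · exact Commute.refl _
  · exact simple_commute_of_adj cs (h c hc hne)

theorem cliqueWord_mul_self {C : Finset V} (hC : (C : Set V).Pairwise G.Adj) :
    cliqueWord cs C * cliqueWord cs C = 1 := by
  have hcomm : ∀ a ∈ C, ∀ b ∈ C, a ≠ b → Commute (cs.simple a) (cs.simple b) :=
    fun _ ha _ hb hab ↦ simple_commute_of_adj cs (hC ha hb hab)
  rw [cliqueWord_eq_noncommProd cs hC]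
  refine (Finset.noncommProd_mul_distrib cs.simple cs.simple _ _ hcomm).symm.trans ?_
  simp only [Pi.mul_apply, cs.simple_mul_simple_self]
  exact (Finset.noncommProd_eq_pow_card _ _ _ 1 fun _ _ ↦ rfl).trans (one_pow _)

theorem cliqueWord_inv {C : Finset V} (hC : (C : Set V).Pairwise G.Adj) :
    (cliqueWord cs C)⁻¹ = cliqueWord cs C :=
  inv_eq_of_mul_eq_one_right (cliqueWord_mul_self cs hC)

theorem cliqueWord_insert {C : Finset V} {v : V} (hv : v ∉ C)
    (hC : ((insert v C : Finset V) : Set V).Pairwise G.Adj) :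
    cliqueWord cs (insert v C) = cs.simple v * cliqueWord cs C := by
  rw [Finset.insert_eq] at hC ⊢
  rw [cliqueWord_union cs (Finset.disjoint_singleton_left.mpr hv) hC, cliqueWord_singleton]

theorem oddLetters_cliqueWord {C : Finset V} (hC : (C : Set V).Pairwise G.Adj) :
    oddLetters cs (cliqueWord cs C) = C := by
  induction C using Finset.induction_on with
  | empty => simp [cliqueWord_empty, oddLetters]
  | insert v C hv ih =>
    have ih := ih (hC.mono (by simp))
    rw [cliqueWord_insert cs hv hC, oddLetters_mul_of_disjoint, oddLetters_simple, ih,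
      Finset.insert_eq]
    rwa [oddLetters_simple, ih, Finset.disjoint_singleton_left]

theorem length_cliqueWord {C : Finset V} (hC : (C : Set V).Pairwise G.Adj) :
    cs.length (cliqueWord cs C) = C.card := by
  refine le_antisymm ?_ <| by
    simpa [oddLetters_cliqueWord cs hC] using card_oddLetters_le_length cs (cliqueWord cs C)
  induction C using Finset.induction_on with
  | empty => simp [cliqueWord_empty]
  | insert v C hv ih =>
    rw [cliqueWord_insert cs hv hC, Finset.card_insert_of_notMem hv]
    grw [cs.length_mul_le, cs.length_simple, ih (hC.mono (by simp)), add_comm]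

theorem cliqueWord_mul_simple_of_mem {C : Finset V} (hC : (C : Set V).Pairwise G.Adj) {v : V}
    (hv : v ∈ C) : cliqueWord cs C * cs.simple v = cliqueWord cs (C.erase v) := by
  have hC' : ((insert v (C.erase v) : Finset V) : Set V).Pairwise G.Adj := by
    rwa [Finset.insert_erase hv]
  have hcomm : Commute (cs.simple v) (cliqueWord cs (C.erase v)) :=
    commute_simple_cliqueWord cs (hC.mono (by simp)) fun c hc _ ↦
      hC hv (Finset.mem_of_mem_erase hc) (Finset.ne_of_mem_erase hc).symm
  conv_lhs => rw [← Finset.insert_erase hv, cliqueWord_insert cs (Finset.notMem_erase v C) hC',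
    hcomm.eq, mul_assoc, cs.simple_mul_simple_self, mul_one]

theorem isRightDescent_cliqueWord_iff {C : Finset V} (hC : (C : Set V).Pairwise G.Adj) (v : V) :
    cs.IsRightDescent (cliqueWord cs C) v ↔ v ∈ C := by
  refine ⟨fun hd ↦ ?_, fun hv ↦ ?_⟩
  · by_contra hv
    have hodd : oddLetters cs (cliqueWord cs C * cs.simple v) = C ∪ {v} := by
      rw [oddLetters_mul_of_disjoint, oddLetters_cliqueWord cs hC, oddLetters_simple]
      rwa [oddLetters_cliqueWord cs hC, oddLetters_simple, Finset.disjoint_singleton_right]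
    have := card_oddLetters_le_length cs (cliqueWord cs C * cs.simple v)
    rw [hodd, Finset.card_union_of_disjoint (Finset.disjoint_singleton_right.mpr hv),
      Finset.card_singleton] at this
    rw [IsRightDescent, length_cliqueWord cs hC] at hd
    omega
  · rw [IsRightDescent, cliqueWord_mul_simple_of_mem cs hC hv,
      length_cliqueWord cs (hC.mono (by simp)), length_cliqueWord cs hC]
    exact Finset.card_erase_lt_of_mem hv

open scoped Classical in
noncomputable def titsPerm (v : V) : Equiv.Perm (W × ZMod 2) :=
  Function.Involutive.toPerm
    (fun p ↦ (cs.simple v * p.1 * cs.simple v, p.2 + if p.1 = cs.simple v then 1 else 0))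
    (fun ⟨t, e⟩ ↦ by
      refine Prod.ext (by simp [mul_assoc]) ?_
      simp only [simple_mul_mul_simple_eq_iff, cs.simple_mul_simple_self, one_mul]
      split_ifs <;> simp [add_assoc, CharTwo.add_self_eq_zero])

open scoped Classical in
theorem titsPerm_apply (v : V) (t : W) (e : ZMod 2) :
    titsPerm cs v (t, e) =
      (cs.simple v * t * cs.simple v, e + if t = cs.simple v then 1 else 0) :=
  rfl

open scoped Classical in
theorem isLiftable_titsPerm : (racgMatrix G).IsLiftable (titsPerm cs) := by
  refine isLiftable_racgMatrix (fun v ↦ Equiv.ext fun p ↦ Function.Involutive.toPerm_involutive _ p)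
    fun a b hab ↦ Equiv.ext fun ⟨t, e⟩ ↦ ?_
  have hcomm := simple_commute_of_adj cs hab
  simp only [Equiv.Perm.mul_apply, titsPerm_apply, simple_mul_mul_simple_eq_iff]
  refine Prod.ext ?_ ?_
  · simp only [← mul_assoc, hcomm.eq]
    simp only [mul_assoc, hcomm.eq]
  · have conj_a : cs.simple b * cs.simple a * cs.simple b = cs.simple a := by
      rw [← hcomm.eq, mul_assoc, cs.simple_mul_simple_self, mul_one]
    have conj_b : cs.simple a * cs.simple b * cs.simple a = cs.simple b := by
      rw [hcomm.eq, mul_assoc, cs.simple_mul_simple_self, mul_one]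
    simp only [conj_a, conj_b]
    ring

noncomputable def titsRep : W →* Equiv.Perm (W × ZMod 2) :=
  cs.lift ⟨titsPerm cs, isLiftable_titsPerm cs⟩

/-- The parity of the number of occurrences of `t` in the right inversion sequence of any word
for `w`. -/
noncomputable def titsCocycle (w t : W) : ZMod 2 :=
  (titsRep cs w (t, 0)).2

open scoped Classical in
theorem titsCocycle_simple (v : V) (t : W) :
    titsCocycle cs (cs.simple v) t = if t = cs.simple v then 1 else 0 := by
  rw [titsCocycle, titsRep, cs.lift_apply_simple, titsPerm_apply, zero_add]

theorem titsRep_apply (w t : W) (e : ZMod 2) :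
    titsRep cs w (t, e) = (w * t * w⁻¹, e + titsCocycle cs w t) := by
  induction w using cs.simple_induction generalizing t e with
  | simple v =>
    rw [titsCocycle_simple, titsRep, cs.lift_apply_simple, titsPerm_apply, cs.inv_simple]
  | one => simp [titsCocycle]
  | mul w w' hw hw' =>
    have hmul : titsCocycle cs (w * w') t =
        titsCocycle cs w' t + titsCocycle cs w (w' * t * w'⁻¹) := by
      conv_lhs => rw [titsCocycle, map_mul, Equiv.Perm.mul_apply, hw', hw, zero_add]
    rw [map_mul, Equiv.Perm.mul_apply, hw', hw, hmul]
    exact Prod.ext (by group) (by ring)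

theorem titsCocycle_mul (w w' t : W) :
    titsCocycle cs (w * w') t = titsCocycle cs w' t + titsCocycle cs w (w' * t * w'⁻¹) := by
  rw [titsCocycle, map_mul, Equiv.Perm.mul_apply, titsRep_apply, titsRep_apply, zero_add]

theorem mem_rightInvSeq_of_titsCocycle_eq_one {ω : List V} {t : W}
    (h : titsCocycle cs (cs.wordProd ω) t = 1) : t ∈ cs.rightInvSeq ω := by
  induction ω with
  | nil => simp [titsCocycle] at h
  | cons i ω ih =>
    classical
    rw [cs.wordProd_cons, titsCocycle_mul, titsCocycle_simple] at h
    simp only [rightInvSeq, List.mem_cons]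
    by_cases ht : titsCocycle cs (cs.wordProd ω) t = 1
    · exact .inr (ih ht)
    · refine .inl ?_
      by_contra hne
      rw [if_neg fun h ↦ hne (by rw [← h]; group)] at h
      exact ht (by simpa using h)

theorem exists_eraseIdx_of_titsCocycle_eq_one {ω : List V} {t : W}
    (h : titsCocycle cs (cs.wordProd ω) t = 1) :
    ∃ j < ω.length, cs.wordProd ω * t = cs.wordProd (ω.eraseIdx j) := by
  obtain ⟨j, hj, rfl⟩ := List.getElem_of_mem (mem_rightInvSeq_of_titsCocycle_eq_one cs h)
  refine ⟨j, cs.length_rightInvSeq ω ▸ hj, ?_⟩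
  rw [← cs.wordProd_mul_getD_rightInvSeq, List.getD_eq_getElem _ _ hj]

theorem length_mul_lt_of_titsCocycle_eq_one {w t : W} (h : titsCocycle cs w t = 1) :
    cs.length (w * t) < cs.length w := by
  obtain ⟨ω, hω, rfl⟩ := cs.exists_isReduced w
  obtain ⟨j, hj, heq⟩ := exists_eraseIdx_of_titsCocycle_eq_one cs h
  rw [heq, hω.eq]
  grw [cs.length_wordProd_le, ← List.length_eraseIdx_add_one hj]
  exact Nat.lt_succ_self _

theorem titsCocycle_simple_of_isRightDescent {w : W} {v : V} (h : cs.IsRightDescent w v) :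
    titsCocycle cs w (cs.simple v) = 1 := by
  classical
  by_contra hne
  have h0 : titsCocycle cs w (cs.simple v) = 0 := by
    generalize titsCocycle cs w (cs.simple v) = x at hne
    decide +revert
  have hflip : titsCocycle cs (w * cs.simple v) (cs.simple v) = 1 := by
    rw [titsCocycle_mul, titsCocycle_simple, if_pos rfl, cs.inv_simple,
      cs.simple_mul_simple_self, one_mul, h0, add_zero]
  have := length_mul_lt_of_titsCocycle_eq_one cs hflip
  rw [cs.simple_mul_simple_cancel_right] at this
  exact absurd h (not_lt.mpr this.le)

/-- The exchange property. -/
theorem exists_eraseIdx_of_isRightDescent {ω : List V} {v : V}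
    (h : cs.IsRightDescent (cs.wordProd ω) v) :
    ∃ j < ω.length, cs.wordProd ω * cs.simple v = cs.wordProd (ω.eraseIdx j) :=
  exists_eraseIdx_of_titsCocycle_eq_one cs (titsCocycle_simple_of_isRightDescent cs h)

theorem finite_setOf_isRightDescent (w : W) : {v | cs.IsRightDescent w v}.Finite := by
  obtain ⟨ω, -, rfl⟩ := cs.exists_isReduced w
  refine ((cs.rightInvSeq ω).finite_toSet.preimage (simple_injective cs).injOn).subset
    fun v hv ↦ ?_
  exact mem_rightInvSeq_of_titsCocycle_eq_one cs (titsCocycle_simple_of_isRightDescent cs hv)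

theorem isRightDescent_mul_simple_of_ne {w : W} {a b : V} (hab : a ≠ b)
    (ha : cs.IsRightDescent w a) (hb : cs.IsRightDescent w b) :
    cs.IsRightDescent (w * cs.simple a) b := by
  obtain ⟨ω, hω, hωw⟩ := cs.exists_isReduced (w * cs.simple b)
  have hw : w = cs.wordProd (ω ++ [b]) := by
    rw [cs.wordProd_append, ← hωw, cs.wordProd_singleton, cs.simple_mul_simple_cancel_right]
  obtain ⟨j, hj, heq⟩ := exists_eraseIdx_of_isRightDescent cs (hw ▸ ha)
  rw [← hw] at heq
  rw [List.length_append, List.length_singleton] at hj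
  obtain hj | rfl := Nat.lt_succ_iff_lt_or_eq.mp hj
  · rw [List.eraseIdx_append_of_lt_length hj, cs.wordProd_append, cs.wordProd_singleton,
      ← cs.simple_mul_simple_cancel_right (w := w * cs.simple a) (i := b)] at heq
    have hlen := cs.length_wordProd_le (ω.eraseIdx j)
    rw [← mul_right_cancel heq] at hlen
    have hω' := hω.eq
    rw [← hωw, ← List.length_eraseIdx_add_one hj] at hω'
    rw [cs.isRightDescent_iff] at ha hb
    rw [IsRightDescent]
    omega
  · simp only [List.eraseIdx_append_of_length_le le_rfl, Nat.sub_self, List.eraseIdx_cons_zero,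
      List.append_nil, ← hωw] at heq
    exact absurd (simple_injective cs (mul_left_cancel heq)) hab

theorem length_mul_wordProd_of_forall_length_le {J : Set V} {z : W}
    (hz : ∀ d : List V, (∀ x ∈ d, x ∈ J) → cs.length z ≤ cs.length (z * cs.wordProd d))
    {m : List V} (hmJ : ∀ x ∈ m, x ∈ J) (hm : cs.IsReduced m) :
    cs.length (z * cs.wordProd m) = cs.length z + m.length := by
  induction m using List.reverseRecOn with
  | nil => simp
  | append_singleton m c ih =>
    have ih := ih (fun x hx ↦ hmJ x (List.mem_append_left _ hx))
      (by simpa using hm.take m.length)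
    rw [cs.wordProd_append, cs.wordProd_singleton, ← mul_assoc, List.length_append,
      List.length_singleton, ← add_assoc, ← ih, ← cs.not_isRightDescent_iff]
    intro hdesc
    obtain ⟨ω, hω, rfl⟩ := cs.exists_isReduced z
    rw [← cs.wordProd_append] at hdesc
    obtain ⟨j, hj, heq⟩ := exists_eraseIdx_of_isRightDescent cs hdesc
    rw [List.length_append] at hj
    obtain hjω | hjω := lt_or_ge j ω.length
    · -- the exchange shortens the coset representative
      rw [List.eraseIdx_append_of_lt_length hjω, cs.wordProd_append, cs.wordProd_append] at heq
      have hshort : cs.wordProd ω * cs.wordProd (m ++ [c] ++ m.reverse) =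
          cs.wordProd (ω.eraseIdx j) := by
        rw [cs.wordProd_append, cs.wordProd_append, cs.wordProd_singleton, cs.wordProd_reverse]
        calc _ = cs.wordProd ω * cs.wordProd m * cs.simple c * (cs.wordProd m)⁻¹ := by group
          _ = _ := by rw [heq, mul_inv_cancel_right]
      have hle := hz (m ++ [c] ++ m.reverse) fun x hx ↦ by
        simp only [List.mem_append, List.mem_reverse] at hx
        exact hmJ x (by simp only [List.mem_append]; tauto)
      rw [hshort, hω.eq] at hle
      have := cs.length_wordProd_le (ω.eraseIdx j)
      have := List.length_eraseIdx_add_one hjω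
      omega
    · -- the exchange shortens the reduced word `m ++ [c]`
      rw [List.eraseIdx_append_of_length_le hjω, cs.wordProd_append, cs.wordProd_append,
        mul_assoc] at heq
      have hshort := mul_left_cancel heq
      have hlen := hm.eq
      rw [cs.wordProd_append, cs.wordProd_singleton, hshort] at hlen
      have := cs.length_wordProd_le (m.eraseIdx (j - ω.length))
      have := List.length_eraseIdx_le m (j - ω.length)
      simp only [List.length_append, List.length_singleton] at hlen
      omega

theorem isChain_ne_of_forall_length_le {m : List V}
    (hm : ∀ m', m'.Sublist m → cs.wordProd m' = cs.wordProd m → m.length ≤ m'.length) :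
    m.IsChain (· ≠ ·) := by
  rw [List.isChain_iff_forall_rel_of_append_cons_cons]
  rintro x _ l₁ l₂ rfl rfl
  have := hm (l₁ ++ l₂) (List.Sublist.append_left (by simp) l₁)
    (by simp [cs.wordProd_append, cs.wordProd_cons])
  simp at this

section Dihedral

variable {a b : V}

/-- `s a` and `s b` act as the reflections of `ℤ` in `-1/2` and `1/2`, so that an alternating
word of length `n` in `a` and `b` moves `0` to `±n`. -/
def dihedralPerm (a b v : V) : Equiv.Perm ℤ :=
  if v = a then Equiv.subLeft (-1) else if v = b then Equiv.subLeft 1 else 1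

theorem isLiftable_dihedralPerm (hnadj : ¬G.Adj a b) :
    (racgMatrix G).IsLiftable (dihedralPerm a b) := by
  refine isLiftable_racgMatrix (fun v ↦ ?_) fun x y hxy ↦ ?_
  · unfold dihedralPerm
    split_ifs <;> ext <;> simp
  · unfold dihedralPerm
    split_ifs <;> subst_vars <;> first
      | exact Commute.one_left _ | exact Commute.one_right _ | exact Commute.refl _
      | exact absurd hxy hnadj | exact absurd hxy.symm hnadj

noncomputable def dihedralRep (hnadj : ¬G.Adj a b) : W →* Equiv.Perm ℤ :=
  cs.lift ⟨dihedralPerm a b, isLiftable_dihedralPerm hnadj⟩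

variable (hnadj : ¬G.Adj a b)

theorem dihedralRep_simple (v : V) : dihedralRep cs hnadj (cs.simple v) = dihedralPerm a b v :=
  cs.lift_apply_simple _ v

theorem natAbs_dihedralRep_sub (w : W) (x y : ℤ) :
    (dihedralRep cs hnadj w x - dihedralRep cs hnadj w y).natAbs = (x - y).natAbs := by
  induction w using cs.simple_induction generalizing x y with
  | simple v =>
    rw [dihedralRep_simple, dihedralPerm]
    split_ifs <;> simp <;> omega
  | one => simp
  | mul w w' hw hw' => simp only [map_mul, Equiv.Perm.mul_apply, hw, hw']

theorem natAbs_dihedralRep_le_length (w : W) : (dihedralRep cs hnadj w 0).natAbs ≤ cs.length w := by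
  suffices ∀ ω : List V, (dihedralRep cs hnadj (cs.wordProd ω) 0).natAbs ≤ ω.length by
    obtain ⟨ω, hω, rfl⟩ := cs.exists_isReduced w
    exact hω.eq ▸ this ω
  intro ω
  induction ω with
  | nil => simp
  | cons i ω ih =>
    rw [cs.wordProd_cons, map_mul, Equiv.Perm.mul_apply, dihedralRep_simple, dihedralPerm,
      List.length_cons]
    split_ifs <;> simp <;> omega

theorem dihedralRep_wordProd_apply_zero (hab : a ≠ b) {m : List V} (hm : m.IsChain (· ≠ ·))
    (hmab : ∀ x ∈ m, x = a ∨ x = b) :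
    dihedralRep cs hnadj (cs.wordProd m) 0 =
      if m.head? = some a then -(m.length : ℤ) else m.length := by
  induction m with
  | nil => simp
  | cons x m ih =>
    have ih := ih hm.tail fun y hy ↦ hmab y (List.mem_cons_of_mem x hy)
    rw [cs.wordProd_cons, map_mul, Equiv.Perm.mul_apply, dihedralRep_simple, ih]
    rcases m with _ | ⟨y, m⟩
    · obtain rfl | rfl := hmab x List.mem_cons_self <;> simp [dihedralPerm, hab.symm]
    · have hxy : x ≠ y := List.rel_of_isChain_cons_cons hm
      obtain rfl | rfl := hmab x List.mem_cons_self <;>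
        obtain rfl | rfl := hmab y (by simp) <;> simp_all [dihedralPerm, hab.symm] <;> ring

theorem length_mul_wordProd_eq_natAbs_dihedralRep (hab : a ≠ b) {z : W}
    (hz : ∀ d : List V, (∀ x ∈ d, x = a ∨ x = b) → cs.length z ≤ cs.length (z * cs.wordProd d))
    {e : List V} (he : ∀ x ∈ e, x = a ∨ x = b) :
    cs.length (z * cs.wordProd e) =
      cs.length z + (dihedralRep cs hnadj (cs.wordProd e) 0).natAbs := by
  set S := {m : List V | (∀ x ∈ m, x = a ∨ x = b) ∧ cs.wordProd m = cs.wordProd e}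
  obtain ⟨m, ⟨hmab, hme⟩, hmin⟩ : ∃ m ∈ S, ∀ m' ∈ S, m.length ≤ m'.length :=
    ⟨_, Function.argminOn_mem List.length S ⟨e, he, rfl⟩,
      fun _ h ↦ Function.argminOn_le List.length S h⟩
  have hchain : m.IsChain (· ≠ ·) := isChain_ne_of_forall_length_le cs fun m' hsub heq ↦
    hmin m' ⟨fun x hx ↦ hmab x (hsub.subset hx), heq.trans hme⟩
  have hval : (dihedralRep cs hnadj (cs.wordProd m) 0).natAbs = m.length := by
    rw [dihedralRep_wordProd_apply_zero cs hnadj hab hchain hmab]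
    split_ifs <;> simp
  have hred : cs.IsReduced m :=
    le_antisymm (cs.length_wordProd_le m) (hval ▸ natAbs_dihedralRep_le_length cs hnadj _)
  rw [← hme, length_mul_wordProd_of_forall_length_le cs (J := {x | x = a ∨ x = b}) hz hmab hred,
    hval]

theorem exists_length_mul_wordProd_eq (hab : a ≠ b) (w : W) :
    ∃ (n : ℕ) (u : W), ∀ c : List V, (∀ x ∈ c, x = a ∨ x = b) →
      cs.length (w * cs.wordProd c) =
        n + (dihedralRep cs hnadj u (dihedralRep cs hnadj (cs.wordProd c) 0)).natAbs := by
  set S := {d : List V | ∀ x ∈ d, x = a ∨ x = b}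
  obtain ⟨d, hd, hmin⟩ : ∃ d ∈ S, ∀ d' ∈ S,
      cs.length (w * cs.wordProd d) ≤ cs.length (w * cs.wordProd d') :=
    ⟨_, Function.argminOn_mem _ S ⟨[], by simp [S]⟩,
      fun _ h ↦ Function.argminOn_le (fun d ↦ cs.length (w * cs.wordProd d)) S h⟩
  set z := w * cs.wordProd d
  have hz : ∀ d' ∈ S, cs.length z ≤ cs.length (z * cs.wordProd d') := fun d' hd' ↦ by
    simpa [z, cs.wordProd_append, mul_assoc] using
      hmin (d ++ d') fun x hx ↦ (List.mem_append.mp hx).elim (hd x) (hd' x)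
  refine ⟨cs.length z, cs.wordProd d.reverse, fun c hc ↦ ?_⟩
  have hw : w * cs.wordProd c = z * cs.wordProd (d.reverse ++ c) := by
    simp [z, cs.wordProd_append, mul_assoc]
  rw [hw, length_mul_wordProd_eq_natAbs_dihedralRep cs hnadj hab hz, cs.wordProd_append, map_mul,
    Equiv.Perm.mul_apply]
  simp only [List.mem_append, List.mem_reverse]
  exact fun x hx ↦ hx.elim (hd x) (hc x)

end Dihedral

theorem adj_of_isRightDescent {w : W} {a b : V} (hab : a ≠ b) (ha : cs.IsRightDescent w a)
    (hb : cs.IsRightDescent w b) : G.Adj a b := by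
  by_contra hnadj
  obtain ⟨n, u, hlen⟩ := exists_length_mul_wordProd_eq cs hnadj hab w
  set f := dihedralRep cs hnadj u
  have h0 := hlen [] (by simp)
  have h1 := hlen [a] (by simp)
  have h2 := hlen [b] (by simp)
  simp only [cs.wordProd_nil, cs.wordProd_singleton, mul_one, map_one, Equiv.Perm.one_apply,
    dihedralRep_simple, dihedralPerm, if_pos, if_neg hab.symm] at h0 h1 h2
  have i1 : (f (-1) - f 0).natAbs = 1 := natAbs_dihedralRep_sub cs hnadj _ _ _
  have i2 : (f 1 - f 0).natAbs = 1 := natAbs_dihedralRep_sub cs hnadj _ _ _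
  have i3 : (f 1 - f (-1)).natAbs = 2 := natAbs_dihedralRep_sub cs hnadj _ _ _
  rw [cs.isRightDescent_iff] at ha hb
  simp only [Equiv.subLeft_apply, sub_zero] at h1 h2
  omega

noncomputable def rightDescents (w : W) : Finset V :=
  (finite_setOf_isRightDescent cs w).toFinset

theorem mem_rightDescents {w : W} {v : V} : v ∈ rightDescents cs w ↔ cs.IsRightDescent w v :=
  Set.Finite.mem_toFinset _

theorem pairwise_adj_rightDescents (w : W) : (rightDescents cs w : Set V).Pairwise G.Adj :=
  fun _ ha _ hb hab ↦
    adj_of_isRightDescent cs hab ((mem_rightDescents cs).mp ha) ((mem_rightDescents cs).mp hb)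

theorem length_mul_cliqueWord_add_card {w : W} {D : Finset V}
    (hD : (D : Set V).Pairwise G.Adj) (hdesc : ∀ v ∈ D, cs.IsRightDescent w v) :
    cs.length (w * cliqueWord cs D) + D.card = cs.length w := by
  induction D using Finset.induction_on generalizing w with
  | empty => simp [cliqueWord_empty]
  | insert v D hv ih =>
    have hw := (cs.isRightDescent_iff).mp (hdesc v (Finset.mem_insert_self v D))
    have := ih (w := w * cs.simple v) (hD.mono (by simp)) fun u hu ↦
      isRightDescent_mul_simple_of_ne cs (fun h ↦ hv (h ▸ hu))
        (hdesc v (Finset.mem_insert_self v D)) (hdesc u (Finset.mem_insert_of_mem hu))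
    rw [cliqueWord_insert cs hv hD, ← mul_assoc, Finset.card_insert_of_notMem hv]
    omega

theorem subset_rightDescents {x : W} {C : Finset V} (hC : (C : Set V).Pairwise G.Adj)
    (hx : cs.length (x * cliqueWord cs C) = cs.length x + C.card) :
    C ⊆ rightDescents cs (x * cliqueWord cs C) := by
  intro c hc
  rw [mem_rightDescents, IsRightDescent, hx, mul_assoc, cliqueWord_mul_simple_of_mem cs hC hc]
  grw [cs.length_mul_le, length_cliqueWord cs (hC.mono (by simp)), Finset.card_erase_lt_of_mem hc]

theorem exists_mem_wtildeR {x : W} {C : Finset V} (hC : (C : Set V).Pairwise G.Adj)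
    (hx : cs.length (x * cliqueWord cs C) = cs.length x + C.card) :
    ∃ A : Finset V, Disjoint A C ∧ ((A ∪ C : Finset V) : Set V).Pairwise G.Adj ∧
      ∃ v ∈ WtildeR cs (cs.length v) (cliqueWord cs A * cliqueWord cs C),
        x = v * cliqueWord cs A ∧ cs.length v + A.card = cs.length x := by
  set y := x * cliqueWord cs C
  have hDclique := pairwise_adj_rightDescents cs y
  have hDdesc : ∀ v, cs.IsRightDescent y v ↔ v ∈ rightDescents cs y :=
    fun v ↦ (mem_rightDescents cs).symm
  obtain ⟨A, hAC, hAD⟩ : ∃ A, Disjoint A C ∧ A ∪ C = rightDescents cs y :=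
    ⟨_, Finset.sdiff_disjoint, Finset.sdiff_union_of_subset (subset_rightDescents cs hC hx)⟩
  generalize rightDescents cs y = D at hDclique hDdesc hAD
  subst hAD
  have hCA : cliqueWord cs (A ∪ C) = cliqueWord cs C * cliqueWord cs A := by
    rw [Finset.union_comm] at hDclique ⊢
    exact cliqueWord_union cs hAC.symm hDclique
  have hxA : x * cliqueWord cs A = y * cliqueWord cs (A ∪ C) := by
    rw [hCA, ← mul_assoc, mul_assoc x, cliqueWord_mul_self cs (hDclique.mono (by simp)), mul_one]
  have hy : x * cliqueWord cs A * cliqueWord cs (A ∪ C) = y := by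
    rw [hxA, mul_assoc, cliqueWord_mul_self cs hDclique, mul_one]
  have hlen := length_mul_cliqueWord_add_card cs hDclique fun v ↦ (hDdesc v).mpr
  rw [← hxA, Finset.card_union_of_disjoint hAC] at hlen
  refine ⟨A, hAC, hDclique, x * cliqueWord cs A, ⟨rfl, ?_, fun v ↦ ?_⟩, ?_, by omega⟩
  · rw [← cliqueWord_union cs hAC hDclique, hy, length_cliqueWord cs hDclique,
      Finset.card_union_of_disjoint hAC]
    omega
  · rw [← cliqueWord_union cs hAC hDclique, hy, isRightDescent_cliqueWord_iff cs hDclique, hDdesc]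
  · rw [mul_assoc, cliqueWord_mul_self cs (hDclique.mono (by simp)), mul_one]

end RACG

open RACG in
theorem S_eq_union_SRho
    {V : Type*} [DecidableEq V] (G : SimpleGraph V) [DecidableRel G.Adj]
    {W : Type*} [Group W] (cs : CoxeterSystem (RACG.racgMatrix G) W)
    (w w₁ w₂ w₃ : W)
    (h : RACG.MemS cs w w₁ w₂ w₃) :
    ∃ (nl nr : ℕ) (ul ur t : W), RACG.MemT cs ul ur t ∧
      nl + cs.length ul + cs.length t + cs.length ur + nr = cs.length w ∧
      RACG.MemSRho cs w nl nr ul ur t w₁ w₂ w₃ := by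
  obtain ⟨hprod, hlen, C, hC, rfl⟩ := h
  have ht := length_cliqueWord cs hC
  have hl := cs.length_mul_left_of_length_mul_mul (hprod ▸ hlen)
  have hr := cs.length_mul_right_of_length_mul_mul (hprod ▸ hlen)
  rw [← cs.length_inv (_ * w₃), mul_inv_rev, cliqueWord_inv cs hC, ← cs.length_inv w₃,
    add_comm] at hr
  obtain ⟨A, hAC, hACc, vl, hvl, hw₁, hA⟩ := exists_mem_wtildeR cs hC (ht ▸ hl)
  obtain ⟨B, hBC, hBCc, vr, hvr, hw₃, hB⟩ := exists_mem_wtildeR cs hC (ht ▸ hr)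
  have hBc : (B : Set V).Pairwise G.Adj := hBCc.mono (by simp)
  have hAl := length_cliqueWord cs (hACc.mono (by simp) : (A : Set V).Pairwise G.Adj)
  have hBl := length_cliqueWord cs hBc
  have hw : vl * (cliqueWord cs A * cliqueWord cs C * cliqueWord cs B) * vr⁻¹ = w := by
    rw [← hprod, hw₁, ← inv_inv w₃, hw₃, mul_inv_rev, cliqueWord_inv cs hBc]
    simp only [mul_assoc]
  have hmid_le := cs.length_mul_mul_le (cliqueWord cs A) (cliqueWord cs C) (cliqueWord cs B)
  have hw_le := hw ▸ cs.length_mul_mul_le vl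
    (cliqueWord cs A * cliqueWord cs C * cliqueWord cs B) vr⁻¹
  rw [cs.length_inv] at hw_le hB
  refine ⟨_, _, cliqueWord cs A, cliqueWord cs B, cliqueWord cs C,
    ⟨⟨A ∪ C, hACc, (cliqueWord_union cs hAC hACc).symm⟩, ⟨C ∪ B, ?_, ?_⟩, ?_⟩, ?_,
    ⟨hprod, hlen, C, hC, rfl⟩, rfl, vl, hvl, vr, hvr, hw₁, ?_⟩
  · rwa [Finset.union_comm]
  · exact (cliqueWord_union cs hBC.symm (by rwa [Finset.union_comm])).symm
  · omega
  · omega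
  · rw [← mul_inv_rev, ← hw₃, inv_inv]
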